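/- arXiv:2203.12149 — 7 statements merged into one kernel-verified Lean document; each statement's English description precedes it below -/
import Mathlib

section
/- If f(x) is a monic polynomial of degree at least 1 over Z/4Z whose reduction modulo 2 factors over Z/2Z as a product of pairwise coprime polynomials t_1(x)···t_r(x), then f(x) factors as f_1(x)···f_r(x) where the f_i are pairwise coprime monic polynomials over Z/4Z with reduction of f_i equal to t_i and deg(f_i) = deg(t_i) for each i. -/
open Polynomial

/-- Reduction mod 2 on coefficients, `ℤ/4 → ℤ/2`. -/
noncomputable def red2 : ZMod 4 →+* ZMod 2 := ZMod.castHom (show (2:ℕ) ∣ 4 by norm_num) (ZMod 2)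

/-!
Reduction `ZMod 4 → ZMod 2` is surjective with square-zero kernel `I`. Coprimality lifts, since
`a A + b B ≡ 1 mod I` is a unit when `I` is nil. To lift `f̄ = g h`, take lifts `G₀` (monic) and
`H₀` and a Bézout relation `a G₀ + b H₀ = 1`; the error `d = f - G₀ H₀ ∈ I[X]` splits as
`d = η G₀ + γ H₀` with `γ = (b d) %ₘ G₀`, both corrections lie in `I[X]`, and so
`(G₀ + γ)(H₀ + η) = f + γ η = f`. Here `G₀ + γ` is monic because `deg γ < deg G₀`, hence so is its
cofactor. Induction on the number of factors finishes the proof.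
-/

theorem Ideal.le_nilradical_of_sq_eq_bot {R : Type*} [CommSemiring R] {I : Ideal R}
    (h : I ^ 2 = ⊥) : I ≤ nilradical R :=
  fun x hx => ⟨2, by simpa [h] using Ideal.pow_mem_pow hx 2⟩

namespace Polynomial

variable {R S : Type*} [CommRing R] [CommRing S] {φ : R →+* S}

theorem isCoprime_of_isCoprime_map (hφ : Function.Surjective φ)
    (hnil : RingHom.ker φ ≤ nilradical R) {A B : R[X]}
    (h : IsCoprime (A.map φ) (B.map φ)) : IsCoprime A B := by
  obtain ⟨a, b, hab⟩ := h
  obtain ⟨a, rfl⟩ := map_surjective φ hφ a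
  obtain ⟨b, rfl⟩ := map_surjective φ hφ b
  have hnilp : IsNilpotent (1 - (a * A + b * B)) := by
    refine Polynomial.isNilpotent_iff.mpr fun i => hnil ?_
    rw [RingHom.mem_ker, ← coeff_map]
    simp [hab]
  have hunit : IsUnit (a * A + b * B) := by simpa using hnilp.isUnit_one_sub
  obtain ⟨v, hv⟩ := hunit.exists_right_inv
  exact ⟨v * a, v * b, by linear_combination hv⟩

theorem mul_eq_zero_of_map_eq_zero (hsq : RingHom.ker φ ^ 2 = ⊥) {P Q : R[X]}
    (hP : P.map φ = 0) (hQ : Q.map φ = 0) : P * Q = 0 := by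
  have hPQ : P * Q ∈ RingHom.ker (mapRingHom φ) ^ 2 := pow_two (M := Ideal R[X]) _ ▸
    Ideal.mul_mem_mul (RingHom.mem_ker.mpr hP) (RingHom.mem_ker.mpr hQ)
  rwa [ker_mapRingHom, ← Ideal.map_pow, hsq, Ideal.map_bot, Ideal.mem_bot] at hPQ

theorem exists_monic_lifts_of_map_eq_mul [Nontrivial S] (hφ : Function.Surjective φ)
    (hsq : RingHom.ker φ ^ 2 = ⊥) {f : R[X]} (hf : f.Monic) {g h : S[X]} (hg : g.Monic)
    (hfgh : f.map φ = g * h) (hgh : IsCoprime g h) :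
    ∃ G H : R[X], f = G * H ∧ G.Monic ∧ H.Monic ∧ G.map φ = g ∧ H.map φ = h := by
  have := φ.domain_nontrivial
  obtain ⟨G₀, hG₀, -, hG₀m⟩ :=
    lifts_and_degree_eq_and_monic ((mem_lifts g).mpr (map_surjective φ hφ g)) hg
  obtain ⟨H₀, rfl⟩ := map_surjective φ hφ h
  subst hG₀
  obtain ⟨a, b, hab⟩ :=
    isCoprime_of_isCoprime_map hφ (Ideal.le_nilradical_of_sq_eq_bot hsq) hgh
  set d := f - G₀ * H₀
  have hd : d.map φ = 0 := by simp [d, hfgh]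
  set γ := (b * d) %ₘ G₀
  set η := a * d + (b * d) /ₘ G₀ * H₀
  have hγ : γ.map φ = 0 := by simp [γ, map_modByMonic φ hG₀m, hd]
  have hη : η.map φ = 0 := by simp [η, map_divByMonic φ hG₀m, hd]
  have hdecomp : γ + G₀ * ((b * d) /ₘ G₀) = b * d := modByMonic_add_div (b * d) G₀
  have hfac : f = (G₀ + γ) * (H₀ + η) := by
    linear_combination (-d) * hab - H₀ * hdecomp - mul_eq_zero_of_map_eq_zero hsq hγ hη
  have hGm : (G₀ + γ).Monic := hG₀m.add_of_left (degree_modByMonic_lt _ hG₀m)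
  refine ⟨G₀ + γ, H₀ + η, hfac, hGm, hGm.of_mul_monic_left (hfac ▸ hf), ?_, ?_⟩
  · rw [Polynomial.map_add, hγ, add_zero]
  · rw [Polynomial.map_add, hη, add_zero]

theorem exists_monic_lifts_of_map_eq_prod [Nontrivial S] (hφ : Function.Surjective φ)
    (hsq : RingHom.ker φ ^ 2 = ⊥) {r : ℕ} {f : R[X]} (hf : f.Monic) {t : Fin r → S[X]}
    (ht : ∀ i, (t i).Monic) (hfact : f.map φ = ∏ i, t i)
    (hcop : Pairwise (Function.onFun IsCoprime t)) :
    ∃ F : Fin r → R[X], f = ∏ i, F i ∧ (∀ i, (F i).Monic) ∧ ∀ i, (F i).map φ = t i := by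
  induction r generalizing f with
  | zero =>
    have hf1 : f.map φ = 1 := by rw [hfact, Fin.prod_univ_zero]
    refine ⟨Fin.elim0, ?_, fun i => i.elim0, fun i => i.elim0⟩
    rw [Fin.prod_univ_zero, ← hf.natDegree_eq_zero, ← hf.natDegree_map φ, hf1, natDegree_one]
  | succ r ih =>
    obtain ⟨G, H, hGH, hGm, hHm, hG, hH⟩ := exists_monic_lifts_of_map_eq_mul hφ hsq hf (ht 0)
      (by rwa [Fin.prod_univ_succ] at hfact)
      (IsCoprime.prod_right fun i _ => hcop (Fin.succ_ne_zero i).symm)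
    obtain ⟨F, hF, hFm, hFt⟩ := ih hHm (fun i => ht i.succ) hH
      (hcop.comp_of_injective (Fin.succ_injective r))
    refine ⟨Fin.cons G F, ?_, Fin.cases hGm hFm, Fin.cases hG hFt⟩
    rw [Fin.prod_univ_succ, Fin.cons_zero, hGH, hF]
    simp only [Fin.cons_succ]

theorem monic_of_ne_zero_zmod_two {p : (ZMod 2)[X]} (hp : p ≠ 0) : p.Monic :=
  (by decide : ∀ c : ZMod 2, c ≠ 0 → c = 1) _ (leadingCoeff_ne_zero.mpr hp)

end Polynomial

theorem ker_red2_sq : RingHom.ker red2 ^ 2 = ⊥ := by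
  rw [pow_two, eq_bot_iff, Submodule.mul_le]
  intro a ha b hb
  rw [RingHom.mem_ker] at ha hb
  rw [Ideal.mem_bot]
  revert a b
  decide

theorem hensel_factorization_general (f : Polynomial (ZMod 4)) (hf : f.Monic)
    (r : ℕ) (t : Fin r → Polynomial (ZMod 2))
    (hfact : f.map red2 = ∏ i, t i)
    (hcop : Pairwise (Function.onFun IsCoprime t)) :
    ∃ F : Fin r → Polynomial (ZMod 4),
      f = ∏ i, F i ∧ (∀ i, (F i).Monic) ∧ Pairwise (Function.onFun IsCoprime F) ∧
      (∀ i, (F i).map red2 = t i) ∧ (∀ i, (F i).natDegree = (t i).natDegree) := by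
  have hsurj : Function.Surjective red2 := ZMod.ringHom_surjective red2
  have ht : ∀ i, (t i).Monic := fun i => monic_of_ne_zero_zmod_two <|
    Finset.prod_ne_zero_iff.mp (hfact ▸ (hf.map red2).ne_zero) i (Finset.mem_univ i)
  obtain ⟨F, hF, hFm, hFt⟩ := exists_monic_lifts_of_map_eq_prod hsurj ker_red2_sq hf ht hfact hcop
  refine ⟨F, hF, hFm, fun i j hij => ?_, hFt, fun i => ?_⟩
  · exact isCoprime_of_isCoprime_map hsurj (Ideal.le_nilradical_of_sq_eq_bot ker_red2_sq)
      (by rw [hFt, hFt]; exact hcop hij)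
  · rw [← hFt, (hFm i).natDegree_map]

/-- Hensel's Lemma: a factorization of the mod-2 reduction of a monic polynomial over `ℤ/4`
into pairwise coprime factors lifts to a factorization over `ℤ/4` into pairwise coprime
monic factors with matching reductions and degrees. -/
theorem hensel_factorization (f : Polynomial (ZMod 4)) (hf : f.Monic)
    (hdeg : 1 ≤ f.natDegree) (r : ℕ) (t : Fin r → Polynomial (ZMod 2))
    (hfact : f.map red2 = ∏ i, t i)
    (hcop : Pairwise (Function.onFun IsCoprime t)) :
    ∃ F : Fin r → Polynomial (ZMod 4),
      f = ∏ i, F i ∧ (∀ i, (F i).Monic) ∧ Pairwise (Function.onFun IsCoprime F) ∧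
      (∀ i, (F i).map red2 = t i) ∧ (∀ i, (F i).natDegree = (t i).natDegree) :=
  hensel_factorization_general f hf r t hfact hcop
end

section
/- Every monic basic irreducible polynomial over Z/4Z is primary, i.e., the principal ideal it generates in Z4[x] is a primary ideal. -/
/-! Reduction mod 2 maps `(ℤ/4)[x]` onto `(ℤ/2)[x]` with a nil kernel, so the radical of `(f)`
is the preimage of `(f mod 2)`. When `f mod 2` is irreducible that preimage is maximal, and an
ideal with maximal radical is primary. -/

open Polynomial

namespace Ideal

variable {R S : Type*} [CommRing R] [CommRing S] {φ : R →+* S}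

theorem radical_comap_map_of_ker_le_nilradical (hφ : Function.Surjective φ)
    (hker : RingHom.ker φ ≤ nilradical R) (I : Ideal R) :
    ((I.map φ).comap φ).radical = I.radical := by
  rw [comap_map_of_surjective _ hφ, ← RingHom.ker_eq_comap_bot]
  refine le_antisymm (radical_le_radical_iff.mpr (sup_le le_radical ?_)) (radical_mono le_sup_left)
  exact hker.trans (radical_mono bot_le)

theorem isPrimary_of_isMaximal_map_of_ker_le_nilradical (hφ : Function.Surjective φ)
    (hker : RingHom.ker φ ≤ nilradical R) {I : Ideal R} (hI : (I.map φ).IsMaximal) :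
    I.IsPrimary := by
  have hmax : ((I.map φ).comap φ).IsMaximal := comap_isMaximal_of_surjective φ hφ
  rw [← hmax.isPrime.isRadical.radical, radical_comap_map_of_ker_le_nilradical hφ hker] at hmax
  exact isPrimary_of_isMaximal_radical hmax

end Ideal

theorem Polynomial.ker_mapRingHom_le_nilradical {R S : Type*} [CommRing R] [CommRing S]
    {φ : R →+* S} (hker : RingHom.ker φ ≤ nilradical R) :
    RingHom.ker (mapRingHom φ) ≤ nilradical R[X] := by
  intro g hg
  rw [mem_nilradical, Polynomial.isNilpotent_iff]
  intro i
  refine mem_nilradical.mp (hker ?_)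
  rw [RingHom.mem_ker, ← coeff_map, ← coe_mapRingHom, hg, coeff_zero]

theorem red2_surjective : Function.Surjective red2 :=
  ZMod.ringHom_surjective red2

theorem ker_red2_le_nilradical : RingHom.ker red2 ≤ nilradical (ZMod 4) := by
  have hsq : ∀ x : ZMod 4, red2 x = 0 → x ^ 2 = 0 := by decide
  exact fun x hx ↦ ⟨2, hsq x hx⟩

theorem basic_irreducible_is_primary_general (f : Polynomial (ZMod 4))
    (hirr : Irreducible (f.map red2)) :
    (Ideal.span {f} : Ideal (Polynomial (ZMod 4))).IsPrimary := by
  refine Ideal.isPrimary_of_isMaximal_map_of_ker_le_nilradical (map_surjective red2 red2_surjective)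
    (ker_mapRingHom_le_nilradical ker_red2_le_nilradical) ?_
  rw [Ideal.map_span, Set.image_singleton]
  exact PrincipalIdealRing.isMaximal_of_irreducible hirr

/-- Every monic basic irreducible polynomial over `ℤ/4` (i.e. a monic polynomial whose
mod-2 reduction is irreducible over `ℤ/2`) is primary: the principal ideal it generates
in `(ℤ/4)[x]` is a primary ideal. -/
theorem basic_irreducible_is_primary (f : Polynomial (ZMod 4)) (hf : f.Monic)
    (hirr : Irreducible (f.map red2)) :
    (Ideal.span {f} : Ideal (Polynomial (ZMod 4))).IsPrimary :=
  basic_irreducible_is_primary_general f hirr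
end

section
/- Let f(x) be a monic polynomial of degree at least 1 over Z/4Z such that its reduction modulo 2 has no multiple roots (is squarefree). Then f(x) = f_1(x)···f_r(x) where the f_i are pairwise coprime monic basic irreducible polynomials over Z/4Z, and this factorization is unique up to rearrangement. -/
/-!
The kernel of reduction `(ZMod 4)[X] → (ZMod 2)[X]` is generated by `2` and squares to zero, so
a Bézout identity modulo 2 lifts to one over `ZMod 4`: coprimality only depends on reductions.
The same fact drives Hensel's lemma: if `f̄ = g h` with `g` monic and `g, h` coprime, lifts
`G₀, H₀` of `g, h` can be corrected by multiples of `2` so that `f = (G₀ + 2U) (H₀ + 2V)`, where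
`U, V` come from solving `ū h + v̄ g = (f - G₀ H₀) / 2` with `deg ū < deg g`. Splitting off one
irreducible factor of the squarefree `f̄` at a time gives existence. For uniqueness, each basic
irreducible `q` in a second factorization has the same reduction as some `pᵢ`, hence is coprime
to the other `pⱼ`, so `q ∣ pᵢ`, and `q = pᵢ` since both are monic of the same degree.
-/

open Polynomial

theorem IsCoprime.of_map_of_ker_le_nilradical {R S : Type*} [CommRing R] [CommRing S]
    {φ : R →+* S} (hφ : Function.Surjective φ) (hker : RingHom.ker φ ≤ nilradical R) {a b : R}
    (h : IsCoprime (φ a) (φ b)) : IsCoprime a b := by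
  obtain ⟨u, v, huv⟩ := h
  obtain ⟨u, rfl⟩ := hφ u
  obtain ⟨v, rfl⟩ := hφ v
  have hnil : IsNilpotent (u * a + v * b - 1) := hker (by simp [RingHom.mem_ker, ← huv])
  have hunit : IsUnit (u * a + v * b) := by simpa using hnil.isUnit_one_add
  exact ⟨hunit.unit⁻¹ * u, hunit.unit⁻¹ * v, by
    rw [mul_assoc, mul_assoc, ← mul_add, hunit.val_inv_mul]⟩

theorem Irreducible.isCoprime_of_squarefree_mul {R : Type*} [CommRing R] [IsPrincipalIdealRing R]
    [IsDomain R] {g h : R} (hg : Irreducible g) (hsq : Squarefree (g * h)) : IsCoprime g h :=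
  hg.coprime_iff_not_dvd.2 fun ⟨k, hk⟩ => hg.not_isUnit (hsq g ⟨k, by rw [hk]; ring⟩)

theorem Polynomial.exists_mul_add_mul_eq_of_isCoprime {R : Type*} [CommRing R] [Nontrivial R]
    {g h : R[X]} (hg : g.Monic) (hgh : IsCoprime g h) (e : R[X]) :
    ∃ u v : R[X], u * h + v * g = e ∧ u.degree < g.degree := by
  obtain ⟨a, b, hab⟩ := hgh
  refine ⟨(b * e) %ₘ g, a * e + h * ((b * e) /ₘ g), ?_, degree_modByMonic_lt _ hg⟩
  calc (b * e) %ₘ g * h + (a * e + h * ((b * e) /ₘ g)) * g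
      = ((b * e) %ₘ g + g * ((b * e) /ₘ g)) * h + a * e * g := by ring
    _ = (a * g + b * h) * e := by rw [modByMonic_add_div _ g]; ring
    _ = e := by rw [hab, one_mul]

theorem ker_red2 : RingHom.ker red2 = Ideal.span {2} := by
  ext x
  rw [RingHom.mem_ker, Ideal.mem_span_singleton']
  revert x
  decide

theorem map_red2_eq_zero_iff {P : (ZMod 4)[X]} : P.map red2 = 0 ↔ ∃ Q, P = 2 * Q := by
  rw [← coe_mapRingHom, ← RingHom.mem_ker, ker_mapRingHom, ker_red2, Ideal.map_span,
    Set.image_singleton, Ideal.mem_span_singleton', map_ofNat]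
  simp only [eq_comm, mul_comm]

theorem two_mul_eq_two_mul_of_map_red2_eq {P Q : (ZMod 4)[X]} (h : P.map red2 = Q.map red2) :
    2 * P = 2 * Q := by
  obtain ⟨R, hR⟩ := map_red2_eq_zero_iff.1 (show (P - Q).map red2 = 0 by
    rw [Polynomial.map_sub, h, sub_self])
  rw [← sub_eq_zero, ← mul_sub, hR]
  linear_combination R * CharP.ofNat_eq_zero (ZMod 4)[X] 4

theorem isCoprime_map_red2_iff {p q : (ZMod 4)[X]} :
    IsCoprime (p.map red2) (q.map red2) ↔ IsCoprime p q := by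
  refine ⟨IsCoprime.of_map_of_ker_le_nilradical (φ := mapRingHom red2)
    (map_surjective _ red2_surjective) fun P hP => ?_, fun h => h.map (mapRingHom red2)⟩
  obtain ⟨Q, rfl⟩ := map_red2_eq_zero_iff.1 hP
  exact mem_nilradical.2 ⟨2, by linear_combination Q ^ 2 * CharP.ofNat_eq_zero (ZMod 4)[X] 4⟩

theorem mem_lifts_red2 (g : (ZMod 2)[X]) : g ∈ lifts red2 :=
  (mem_lifts g).2 (map_surjective _ red2_surjective g)

theorem map_red2_add_two_mul (P Q : (ZMod 4)[X]) : (P + 2 * Q).map red2 = P.map red2 := by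
  rw [Polynomial.map_add, Polynomial.map_mul, Polynomial.map_ofNat,
    CharP.ofNat_eq_zero (ZMod 2)[X] 2, zero_mul, add_zero]

theorem exists_monic_factorization_lift {f : (ZMod 4)[X]} (hf : f.Monic) {g h : (ZMod 2)[X]}
    (hg : g.Monic) (hfgh : f.map red2 = g * h) (hgh : IsCoprime g h) :
    ∃ G H : (ZMod 4)[X], G.Monic ∧ H.Monic ∧ f = G * H ∧ G.map red2 = g ∧ H.map red2 = h := by
  obtain ⟨G₀, hG₀, hG₀deg, hG₀m⟩ := lifts_and_degree_eq_and_monic (mem_lifts_red2 g) hg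
  obtain ⟨H₀, hH₀⟩ := map_surjective _ red2_surjective h
  obtain ⟨e, he⟩ := map_red2_eq_zero_iff.1 (show (f - G₀ * H₀).map red2 = 0 by
    rw [Polynomial.map_sub, Polynomial.map_mul, hfgh, hG₀, hH₀, sub_self])
  obtain ⟨u, v, huv, hu⟩ := exists_mul_add_mul_eq_of_isCoprime hg hgh (e.map red2)
  obtain ⟨U, hU, hUdeg⟩ := exists_degree_eq_of_mem_lifts (mem_lifts_red2 u)
  obtain ⟨V, hV⟩ := map_surjective _ red2_surjective v
  have hG : (G₀ + 2 * U).Monic := hG₀m.add_of_left <| calc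
    (2 * U).degree ≤ U.degree := by rw [two_mul]; exact (degree_add_le U U).trans (max_self _).le
    _ < G₀.degree := by rwa [hUdeg, hG₀deg]
  have hfGH : f = (G₀ + 2 * U) * (H₀ + 2 * V) := by
    have h2 : 2 * (U * H₀ + V * G₀) = 2 * e := two_mul_eq_two_mul_of_map_red2_eq <| by
      rw [Polynomial.map_add, Polynomial.map_mul, Polynomial.map_mul, hU, hV, hG₀, hH₀, huv]
    linear_combination he - h2 - U * V * CharP.ofNat_eq_zero (ZMod 4)[X] 4
  refine ⟨_, _, hG, hG.of_mul_monic_left (hfGH ▸ hf), hfGH, ?_, ?_⟩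
  · rw [map_red2_add_two_mul, hG₀]
  · rw [map_red2_add_two_mul, hH₀]

def IsBasicIrreducible (p : (ZMod 4)[X]) : Prop := p.Monic ∧ Irreducible (p.map red2)

theorem exists_isBasicIrreducible_factorization {f : (ZMod 4)[X]} (hf : f.Monic)
    (hsq : Squarefree (f.map red2)) :
    ∃ L : List (ZMod 4)[X], f = L.prod ∧ (∀ p ∈ L, IsBasicIrreducible p) ∧
      L.Pairwise IsCoprime := by
  induction hn : f.natDegree using Nat.strong_induction_on generalizing f with
  | _ n ih =>
  obtain rfl | hn0 := eq_or_ne n 0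
  · exact ⟨[], hf.natDegree_eq_zero.1 hn, by simp, .nil⟩
  obtain ⟨g, hgm, hgirr, h, hfgh⟩ := exists_monic_irreducible_factor (f.map red2)
    (not_isUnit_of_natDegree_pos _ (by rw [hf.natDegree_map, hn]; exact Nat.pos_of_ne_zero hn0))
  have hgh : IsCoprime g h := hgirr.isCoprime_of_squarefree_mul (hfgh ▸ hsq)
  obtain ⟨G, H, hGm, hHm, rfl, rfl, rfl⟩ := exists_monic_factorization_lift hf hgm hfgh hgh
  have hHdeg : H.natDegree < n := by
    rw [← hn, hGm.natDegree_mul hHm, ← hGm.natDegree_map red2]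
    have := natDegree_pos_iff_degree_pos.2 (degree_pos_of_irreducible hgirr)
    omega
  obtain ⟨L, hHL, hL, hcop⟩ := ih _ hHdeg hHm (hsq.squarefree_of_dvd (by
    rw [Polynomial.map_mul]; exact dvd_mul_left _ _)) rfl
  refine ⟨G :: L, by rw [List.prod_cons, ← hHL], ?_, List.pairwise_cons.2 ⟨fun t ht => ?_, hcop⟩⟩
  · exact List.forall_mem_cons.2 ⟨⟨hGm, hgirr⟩, hL⟩
  · exact (isCoprime_map_red2_iff.1 hgh).of_isCoprime_of_dvd_right (hHL ▸ List.dvd_prod ht)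

theorem exists_mem_map_red2_eq_of_dvd_prod {p : (ZMod 4)[X]} (hp : IsBasicIrreducible p)
    {L : List (ZMod 4)[X]} (hL : ∀ q ∈ L, IsBasicIrreducible q) (hdvd : p ∣ L.prod) :
    ∃ q ∈ L, q.map red2 = p.map red2 := by
  have hdvd' : p.map red2 ∣ (L.map (map red2)).prod := by
    rw [← Polynomial.map_list_prod]; exact map_dvd red2 hdvd
  obtain ⟨_, hq, hpq⟩ := hp.2.prime.dvd_prod_iff.1 hdvd'
  obtain ⟨q, hqL, rfl⟩ := List.mem_map.1 hq
  exact ⟨q, hqL, (eq_of_monic_of_associated (hp.1.map red2) ((hL q hqL).1.map red2)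
    (hp.2.associated_of_dvd (hL q hqL).2 hpq)).symm⟩

theorem eq_of_map_red2_eq_of_dvd_mul {p q t : (ZMod 4)[X]} (hp : p.Monic) (hq : q.Monic)
    (hqp : q.map red2 = p.map red2) (hpt : IsCoprime p t) (hdvd : q ∣ p * t) : q = p := by
  have hqt : IsCoprime q t := by
    rw [← isCoprime_map_red2_iff, hqp, isCoprime_map_red2_iff]; exact hpt
  refine (eq_of_monic_of_dvd_of_natDegree_le hq hp (hqt.dvd_of_dvd_mul_right hdvd) ?_).symm
  rw [← hp.natDegree_map red2, ← hq.natDegree_map red2, hqp]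

theorem perm_of_prod_eq_of_isBasicIrreducible {L L' : List (ZMod 4)[X]}
    (hL : ∀ p ∈ L, IsBasicIrreducible p) (hL' : ∀ p ∈ L', IsBasicIrreducible p)
    (hcop : L.Pairwise IsCoprime) (hprod : L.prod = L'.prod) : L.Perm L' := by
  induction L generalizing L' with
  | nil =>
    cases L' with
    | nil => rfl
    | cons q _ =>
      have hq : IsUnit q := isUnit_of_dvd_one
        (hprod ▸ List.dvd_prod List.mem_cons_self : q ∣ List.prod [])
      exact ((hL' q List.mem_cons_self).2.not_isUnit (hq.map (mapRingHom red2))).elim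
  | cons p T ih =>
    rw [List.pairwise_cons] at hcop
    rw [List.forall_mem_cons] at hL
    obtain ⟨q, hqL', hqp⟩ := exists_mem_map_red2_eq_of_dvd_prod hL.1 hL'
      (hprod ▸ List.dvd_prod List.mem_cons_self)
    have hpT : IsCoprime p T.prod :=
      List.prod_induction _ (fun _ _ => IsCoprime.mul_right) isCoprime_one_right hcop.1
    obtain rfl : q = p := eq_of_map_red2_eq_of_dvd_mul hL.1.1 (hL' q hqL').1 hqp hpT
      (by rw [← List.prod_cons, hprod]; exact List.dvd_prod hqL')
    have hperm := List.perm_cons_erase hqL'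
    refine .trans (.cons q (ih hL.2 (fun r hr => hL' r (List.mem_of_mem_erase hr)) hcop.2 ?_))
      hperm.symm
    exact hL.1.1.isRegular.left (show q * T.prod = q * (L'.erase q).prod by
      rw [← List.prod_cons, ← List.prod_cons, hprod, hperm.prod_eq])

theorem factorization_basic_irreducible_general (f : Polynomial (ZMod 4)) (hf : f.Monic)
    (hsq : Squarefree (f.map red2)) :
    ∃ L : List (Polynomial (ZMod 4)),
      f = L.prod ∧
      (∀ p ∈ L, p.Monic ∧ Irreducible (p.map red2)) ∧
      L.Pairwise IsCoprime ∧
      ∀ L' : List (Polynomial (ZMod 4)),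
        f = L'.prod → (∀ p ∈ L', p.Monic ∧ Irreducible (p.map red2)) →
        L'.Pairwise IsCoprime → L'.Perm L := by
  obtain ⟨L, hfL, hL, hcop⟩ := exists_isBasicIrreducible_factorization hf hsq
  exact ⟨L, hfL, hL, hcop, fun L' hfL' hL' hcop' =>
    perm_of_prod_eq_of_isBasicIrreducible hL' hL hcop' (hfL'.symm.trans hfL)⟩

/-- A monic polynomial of degree ≥ 1 over `ℤ/4` whose mod-2 reduction is squarefree
factors into pairwise coprime monic basic irreducible polynomials, uniquely up to
rearrangement. -/
theorem factorization_basic_irreducible (f : Polynomial (ZMod 4)) (hf : f.Monic)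
    (hdeg : 1 ≤ f.natDegree) (hsq : Squarefree (f.map red2)) :
    ∃ L : List (Polynomial (ZMod 4)),
      f = L.prod ∧
      (∀ p ∈ L, p.Monic ∧ Irreducible (p.map red2)) ∧
      L.Pairwise IsCoprime ∧
      ∀ L' : List (Polynomial (ZMod 4)),
        f = L'.prod → (∀ p ∈ L', p.Monic ∧ Irreducible (p.map red2)) →
        L'.Pairwise IsCoprime → L'.Perm L :=
  factorization_basic_irreducible_general f hf hsq
end

section
/- Let f(x) and g(x) be monic polynomials over Z/4Z whose reductions modulo 2 have no multiple roots, and let d(x) = gcd4(f,g) be their greatest common monic divisor (defined via the common basic irreducible factors). If f(x)/d(x) and g(x)/d(x) are coprime over Z4, then the ideal of Z4[x] generated by f(x) and g(x) equals the principal ideal generated by d(x). -/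
open Polynomial

/-- Let `f` and `g` be monic polynomials over `ℤ/4` with squarefree mod-2 reductions and
let `d = gcd₄(f,g)` be their greatest common monic divisor, so that `f = d * f'`,
`g = d * g'`.  If `f' = f/d` and `g' = g/d` are coprime over `ℤ/4`, then the ideal
generated by `f` and `g` equals the principal ideal generated by `d`. -/
theorem span_pair_eq_span_gcd (f g d f' g' : Polynomial (ZMod 4))
    (hf : f.Monic) (hg : g.Monic) (hd : d.Monic)
    (hsf : Squarefree (f.map red2)) (hsg : Squarefree (g.map red2))
    (hff : f = d * f') (hgg : g = d * g')
    (hcop : IsCoprime f' g') :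
    (Ideal.span {f, g} : Ideal (Polynomial (ZMod 4))) = Ideal.span {d} := by
  obtain ⟨a, b, hab⟩ := hcop
  apply le_antisymm
  · rw [Ideal.span_le]
    rintro x (rfl | rfl)
    · exact Ideal.mem_span_singleton.2 ⟨f', hff⟩
    · exact Ideal.mem_span_singleton.2 ⟨g', hgg⟩
  · rw [Ideal.span_le, Set.singleton_subset_iff]
    have hdeq : a * f + b * g = d := by
      rw [hff, hgg]; linear_combination d * hab
    exact hdeq ▸ Ideal.mem_span_pair.2 ⟨a, b, rfl⟩
end

section
/- Every GQC code C of block lengths (m_1,...,m_l) over Z4 admits a set of l generators a_1,...,a_l as a Z4[x]-submodule of R, in upper triangular form: a_i = (F_{i,1}|...|F_{i,i}|0|...|0), where each diagonal entry has the form F_{i,i} = f_{i,i}(x)+2g_{i,i}(x) with f_{i,i}, g_{i,i} monic polynomials over Z4 satisfying g_{i,i}(x) | f_{i,i}(x) | x^{m_i}−1. -/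
open Polynomial

/-- The quotient ring `(ℤ/4)[x]/(x^k - 1)`. -/
abbrev R4 (k : ℕ) : Type :=
  Polynomial (ZMod 4) ⧸ (Ideal.span {(X : Polynomial (ZMod 4)) ^ k - 1})

/-!
Reduction modulo 2 sends an ideal `J ∋ x^m - 1` of `(ℤ/4)[x]` to two ideals of the principal
ideal domain `𝔽₂[x]`: the image `(f)` of `J` and the image `(g)` of `(J : 2) = {b | 2b ∈ J}`, with
`g ∣ f ∣ x^m - 1`. As `m` is odd, `x^m - 1` is separable over `𝔽₂`, so `x^m - 1 = g u v` with
`f = g u` has pairwise coprime factors and lifts by Hensel's lemma (a single Newton step, since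
`4 = 0`) to `x^m - 1 = G U V` with monic factors over `ℤ/4`. For `F = G U` one finds
`J = (F, 2G) = (F + 2G, x^m - 1)`.

For a code `C`, the `i`-th coordinates of the codewords vanishing beyond the `i`-th block form
such an ideal; lifting its generator to a codeword for every `i` gives an upper-triangular
generating set, by back-substitution from the last block.
-/

section Triangular

variable {R : Type*} [Ring R] {l : ℕ} {M : Fin l → Type*} [∀ i, AddCommGroup (M i)]
  [∀ i, Module R (M i)]

def pivotSubmodule (C : Submodule R (∀ i, M i)) (i : Fin l) : Submodule R (M i) :=
  (C ⊓ Submodule.pi (Set.Ioi i) fun _ => ⊥).map (LinearMap.proj i)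

lemma mem_span_of_pivotSubmodule_le {C : Submodule R (∀ i, M i)} {a : Fin l → ∀ j, M j}
    (ha : ∀ i, a i ∈ C ⊓ Submodule.pi (Set.Ioi i) fun _ => ⊥)
    (hpiv : ∀ i, pivotSubmodule C i ≤ Submodule.span R {a i i}) (n : ℕ) :
    ∀ c ∈ C, (∀ j : Fin l, n ≤ j → c j = 0) → c ∈ Submodule.span R (Set.range a) := by
  induction n with
  | zero =>
    intro c _ hc
    rw [show c = 0 from funext fun j => hc j j.val.zero_le]
    exact Submodule.zero_mem _
  | succ n ih =>
    intro c hcC hc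
    by_cases hn : n < l
    swap
    · exact ih c hcC fun j hj => absurd (j.isLt.trans_le (not_lt.1 hn)) hj.not_gt
    set i : Fin l := ⟨n, hn⟩
    have hci : c ∈ C ⊓ Submodule.pi (Set.Ioi i) fun _ => ⊥ :=
      ⟨hcC, Submodule.mem_pi.2 fun j hj => (Submodule.mem_bot R).2 (hc j hj)⟩
    obtain ⟨r, hr⟩ := Submodule.mem_span_singleton.1 (hpiv i ⟨c, hci, rfl⟩)
    have hai := Submodule.mem_pi.1 (ha i).2
    have hrest : c - r • a i ∈ Submodule.span R (Set.range a) := by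
      refine ih _ (C.sub_mem hcC (C.smul_mem r (ha i).1)) fun j hj => ?_
      rcases hj.eq_or_lt with hji | hij
      · rw [show j = i from Fin.ext hji.symm]
        simp [hr]
      · simp [hc j hij, (Submodule.mem_bot R).1 (hai j hij)]
    simpa using Submodule.add_mem _ hrest (Submodule.smul_mem _ r (Submodule.subset_span ⟨i, rfl⟩))

theorem exists_triangular_span_eq (C : Submodule R (∀ i, M i)) (d : ∀ i, M i)
    (hd : ∀ i, pivotSubmodule C i = Submodule.span R {d i}) :
    ∃ a : Fin l → ∀ j, M j, C = Submodule.span R (Set.range a) ∧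
      (∀ i j, i < j → a i j = 0) ∧ ∀ i, a i i = d i := by
  have hpivot (i : Fin l) : ∃ a ∈ C ⊓ Submodule.pi (Set.Ioi i) (fun _ => ⊥), a i = d i :=
    (hd i ▸ Submodule.mem_span_singleton_self (d i) : d i ∈ pivotSubmodule C i)
  choose a ha had using hpivot
  refine ⟨a, le_antisymm (fun c hc => ?_) ?_, fun i j hij => ?_, had⟩
  · exact mem_span_of_pivotSubmodule_le ha (fun i => (hd i).trans (by rw [had]) |>.le) l c hc
      fun j hj => absurd j.isLt hj.not_gt
  · exact Submodule.span_le.2 (Set.range_subset_iff.2 fun i => (ha i).1)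
  · exact (Submodule.mem_bot R).1 (Submodule.mem_pi.1 (ha i).2 j hij)

end Triangular


instance : Fact (1 < 4) := ⟨by norm_num⟩

noncomputable def modTwo : (ZMod 4)[X] →+* (ZMod 2)[X] :=
  mapRingHom (ZMod.castHom (by decide : 2 ∣ 4) (ZMod 2))

lemma modTwo_surjective : Function.Surjective modTwo :=
  map_surjective _ (ZMod.ringHom_surjective _)

lemma ker_modTwo : RingHom.ker modTwo = Ideal.span {2} := by
  have hker : RingHom.ker (ZMod.castHom (by decide : 2 ∣ 4) (ZMod 2)) = Ideal.span {2} := by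
    ext a
    rw [RingHom.mem_ker, Ideal.mem_span_singleton]
    revert a
    decide
  rw [modTwo, ker_mapRingHom, hker, Ideal.map_span, Set.image_singleton, map_ofNat]

lemma modTwo_eq_zero_iff {c : (ZMod 4)[X]} : modTwo c = 0 ↔ 2 ∣ c := by
  rw [← RingHom.mem_ker, ker_modTwo, Ideal.mem_span_singleton]

lemma coeff_modTwo_eq_zero_iff (c : (ZMod 4)[X]) (n : ℕ) :
    (modTwo c).coeff n = 0 ↔ (2 * c).coeff n = 0 := by
  rw [modTwo, coe_mapRingHom, coeff_map, coeff_ofNat_mul]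
  generalize c.coeff n = a
  revert a
  decide

lemma two_mul_eq_zero_iff {c : (ZMod 4)[X]} : 2 * c = 0 ↔ modTwo c = 0 := by
  simp only [Polynomial.ext_iff, coeff_modTwo_eq_zero_iff, coeff_zero]

lemma two_mul_eq_two_mul_of_modTwo_eq {c d : (ZMod 4)[X]} (h : modTwo c = modTwo d) :
    2 * c = 2 * d := by
  rw [← sub_eq_zero, ← mul_sub, two_mul_eq_zero_iff, map_sub, h, sub_self]

lemma degree_modTwo (c : (ZMod 4)[X]) : (modTwo c).degree = (2 * c).degree := by
  have hsupp : (modTwo c).support = (2 * c).support := by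
    ext n
    simp only [mem_support_iff, ne_eq, coeff_modTwo_eq_zero_iff]
  rw [degree, degree, hsupp]

lemma modTwo_two_mul (c : (ZMod 4)[X]) : modTwo (2 * c) = 0 :=
  modTwo_eq_zero_iff.2 (dvd_mul_right 2 c)

lemma four_eq_zero : (4 : (ZMod 4)[X]) = 0 := CharP.ofNat_eq_zero _ 4

theorem exists_degree_lt_mul_add_mul_eq {R : Type*} [CommRing R] [Nontrivial R] {g h e : R[X]}
    (hg : g.Monic) (hh : h.Monic) (hgh : IsCoprime g h) (he : e.degree < g.degree + h.degree) :
    ∃ p q : R[X], p.degree < g.degree ∧ q.degree < h.degree ∧ p * h + q * g = e := by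
  obtain ⟨a, b, hab⟩ := hgh
  set p := (b * e) %ₘ g
  set q := a * e + (b * e /ₘ g) * h
  have hpq : p * h + q * g = e := by
    linear_combination h * modByMonic_add_div (b * e) g + e * hab
  have hp : p.degree < g.degree := degree_modByMonic_lt _ hg
  refine ⟨p, q, hp, ?_, hpq⟩
  have hqg : q.degree + g.degree < g.degree + h.degree :=
    calc q.degree + g.degree = (e - p * h).degree := by
          rw [← hg.degree_mul, ← hpq, add_sub_cancel_left]
      _ ≤ max e.degree (p * h).degree := degree_sub_le _ _
      _ < g.degree + h.degree := by
        rw [hh.degree_mul]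
        exact max_lt he (WithBot.add_lt_add_right (degree_ne_bot.2 hh.ne_zero) hp)
  rw [add_comm g.degree] at hqg
  exact lt_of_add_lt_add_right hqg

lemma exists_monic_lift {g : (ZMod 2)[X]} (hg : g.Monic) :
    ∃ G : (ZMod 4)[X], G.Monic ∧ modTwo G = g ∧ G.degree = g.degree := by
  have hlift : g ∈ lifts (ZMod.castHom (by decide : 2 ∣ 4) (ZMod 2)) :=
    (mem_lifts g).2 (modTwo_surjective g)
  obtain ⟨G, hG, hdeg, hm⟩ := lifts_and_degree_eq_and_monic hlift hg
  exact ⟨G, hm, hG, hdeg⟩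

theorem exists_monic_lift_mul {T : (ZMod 4)[X]} (hT : T.Monic) {g h : (ZMod 2)[X]}
    (hg : g.Monic) (hh : h.Monic) (hgh : IsCoprime g h) (hTgh : modTwo T = g * h) :
    ∃ G H : (ZMod 4)[X], G.Monic ∧ H.Monic ∧ modTwo G = g ∧ modTwo H = h ∧ G * H = T := by
  obtain ⟨G₀, hG₀m, hG₀, hG₀deg⟩ := exists_monic_lift hg
  obtain ⟨H₀, hH₀m, hH₀, hH₀deg⟩ := exists_monic_lift hh
  have hTdeg : T.degree = g.degree + h.degree := by
    rw [← hh.degree_mul, ← hTgh]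
    exact (hT.degree_map _).symm
  obtain ⟨e, he⟩ : 2 ∣ T - G₀ * H₀ := by
    rw [← modTwo_eq_zero_iff, map_sub, map_mul, hG₀, hH₀, hTgh, sub_self]
  have he_deg : (modTwo e).degree < g.degree + h.degree := by
    rw [degree_modTwo, ← he, ← hTdeg]
    refine degree_sub_lt_left ?_ hT.ne_zero ?_
    · rw [hH₀m.degree_mul, hTdeg, hG₀deg, hH₀deg]
    · rw [hT.leadingCoeff, (hG₀m.mul hH₀m).leadingCoeff]
  obtain ⟨p', q', hp', hq', hpq'⟩ := exists_degree_lt_mul_add_mul_eq hg hh hgh he_deg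
  obtain ⟨p, rfl⟩ := modTwo_surjective p'
  obtain ⟨q, rfl⟩ := modTwo_surjective q'
  have hcorr : 2 * (p * H₀ + q * G₀) = 2 * e :=
    two_mul_eq_two_mul_of_modTwo_eq (by rw [← hpq', map_add, map_mul, map_mul, hG₀, hH₀])
  refine ⟨G₀ + 2 * p, H₀ + 2 * q, ?_, ?_, ?_, ?_, ?_⟩
  · exact hG₀m.add_of_left (by rwa [← degree_modTwo, hG₀deg])
  · exact hH₀m.add_of_left (by rwa [← degree_modTwo, hH₀deg])
  · rw [map_add, hG₀, modTwo_two_mul, add_zero]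
  · rw [map_add, hH₀, modTwo_two_mul, add_zero]
  · linear_combination -he + hcorr + p * q * four_eq_zero

theorem exists_monic_lift_dvd {T : (ZMod 4)[X]} (hT : T.Monic) (hsep : (modTwo T).Separable)
    {g : (ZMod 2)[X]} (hg : g.Monic) (hgT : g ∣ modTwo T) :
    ∃ G H : (ZMod 4)[X], G.Monic ∧ modTwo G = g ∧ G * H = T := by
  obtain ⟨h, hgh⟩ := hgT
  have hTm : (modTwo T).Monic := hT.map _
  obtain ⟨G, H, hGm, -, hG, -, hGH⟩ :=
    exists_monic_lift_mul hT hg (hg.of_mul_monic_left (hgh ▸ hTm)) (hgh ▸ hsep).isCoprime hgh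
  exact ⟨G, H, hGm, hG, hGH⟩

lemma monic_X_pow_sub_one {R : Type*} [Ring R] [Nontrivial R] {k : ℕ} (hk : k ≠ 0) :
    (X ^ k - 1 : R[X]).Monic :=
  monic_X_pow_sub (by rw [degree_one]; exact_mod_cast Nat.pos_of_ne_zero hk)

lemma modTwo_X_pow_sub_one (k : ℕ) : modTwo (X ^ k - 1) = X ^ k - 1 := by
  rw [map_sub, map_pow, map_one, modTwo, coe_mapRingHom, map_X]

lemma separable_X_pow_sub_one {k : ℕ} (hk : Odd k) : (X ^ k - 1 : (ZMod 2)[X]).Separable :=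
  X_pow_sub_one_separable_iff.2 (ZMod.natCast_eq_zero_iff_even.not.2 (Nat.not_even_iff_odd.2 hk))

theorem exists_lift_of_dvd_dvd_X_pow_sub_one {k : ℕ} (hk : Odd k) {f g : (ZMod 2)[X]}
    (hf : f.Monic) (hg : g.Monic) (hgf : g ∣ f) (hfX : f ∣ X ^ k - 1) :
    ∃ F G U V : (ZMod 4)[X], F.Monic ∧ G.Monic ∧ modTwo F = f ∧ modTwo G = g ∧
      G * U = F ∧ F * V = X ^ k - 1 ∧
      IsCoprime (modTwo G) (modTwo V) ∧ IsCoprime (modTwo U) (modTwo V) := by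
  have hsep := separable_X_pow_sub_one hk
  rw [← modTwo_X_pow_sub_one] at hsep hfX
  obtain ⟨F, V, hFm, hF, hFV⟩ := exists_monic_lift_dvd (monic_X_pow_sub_one hk.pos.ne') hsep hf hfX
  have hsepF : (modTwo F).Separable := hsep.of_dvd (hFV ▸ map_dvd modTwo (dvd_mul_right F V))
  obtain ⟨G, U, hGm, hG, hGU⟩ := exists_monic_lift_dvd hFm hsepF hg (hF ▸ hgf)
  have hsepGUV : (modTwo G * modTwo U * modTwo V).Separable := by
    rwa [← map_mul, ← map_mul, hGU, hFV]
  refine ⟨F, G, U, V, hFm, hGm, hF, hG, hGU, hFV, ?_, ?_⟩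
  · exact hsepGUV.isCoprime.of_mul_left_left
  · exact hsepGUV.isCoprime.of_mul_left_right

lemma two_mul_mem_of_isCoprime {L : Ideal (ZMod 4)[X]} {G U V : (ZMod 4)[X]}
    (hU : 2 * G * U ∈ L) (hV : 2 * G * V ∈ L) (hUV : IsCoprime (modTwo U) (modTwo V)) :
    2 * G ∈ L := by
  obtain ⟨A', B', hAB⟩ := hUV
  obtain ⟨A, rfl⟩ := modTwo_surjective A'
  obtain ⟨B, rfl⟩ := modTwo_surjective B'
  have h2 : 2 * (A * U + B * V) = 2 * 1 :=
    two_mul_eq_two_mul_of_modTwo_eq (by rw [map_add, map_mul, map_mul, hAB, map_one])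
  have hG : 2 * G = A * (2 * G * U) + B * (2 * G * V) := by linear_combination -G * h2
  rw [hG]
  exact L.add_mem (L.mul_mem_left A hU) (L.mul_mem_left B hV)

lemma span_eq_span_add_two_mul {F G U V : (ZMod 4)[X]} (hGU : G * U = F)
    (hUV : IsCoprime (modTwo U) (modTwo V)) :
    Ideal.span {F, 2 * G} = Ideal.span {F + 2 * G, F * V} := by
  set L := Ideal.span {F + 2 * G, F * V}
  have hsum : F + 2 * G ∈ L := Ideal.subset_span (Set.mem_insert _ _)
  have hFV : F * V ∈ L := Ideal.subset_span (Set.mem_insert_of_mem _ rfl)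
  have h2G : 2 * G ∈ L := by
    refine two_mul_mem_of_isCoprime ?_ ?_ hUV
    · have : 2 * G * U = 2 * (F + 2 * G) := by linear_combination 2 * hGU - G * four_eq_zero
      exact this ▸ L.mul_mem_left 2 hsum
    · have : 2 * G * V = V * (F + 2 * G) - F * V := by ring
      exact this ▸ L.sub_mem (L.mul_mem_left V hsum) hFV
  apply le_antisymm <;> rw [Ideal.span_le, Set.insert_subset_iff, Set.singleton_subset_iff]
  · exact ⟨(add_sub_cancel_right F (2 * G)) ▸ L.sub_mem hsum h2G, h2G⟩
  · exact ⟨Ideal.add_mem _ (Ideal.subset_span (Set.mem_insert _ _))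
      (Ideal.subset_span (Set.mem_insert_of_mem _ rfl)),
      Ideal.mul_mem_right _ _ (Ideal.subset_span (Set.mem_insert _ _))⟩

lemma two_mul_dvd_two_mul_of_modTwo_dvd {G d : (ZMod 4)[X]} (h : modTwo G ∣ modTwo d) :
    2 * G ∣ 2 * d := by
  obtain ⟨r', hr'⟩ := h
  obtain ⟨r, rfl⟩ := modTwo_surjective r'
  exact ⟨r, by rw [two_mul_eq_two_mul_of_modTwo_eq (hr'.trans (map_mul _ _ _).symm), mul_assoc]⟩

theorem eq_span_of_map_modTwo {J : Ideal (ZMod 4)[X]} {F G V : (ZMod 4)[X]} (hFV : F * V ∈ J)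
    (hGV : IsCoprime (modTwo G) (modTwo V)) (hJ : J.map modTwo = Ideal.span {modTwo F})
    (hK : ∀ b, 2 * b ∈ J ↔ modTwo G ∣ modTwo b) :
    J = Ideal.span {F, 2 * G} := by
  have h2G : 2 * G ∈ J := (hK G).2 dvd_rfl
  have hF : F ∈ J := by
    -- a lift `a = F + 2c ∈ J` of `f` gives `2cV = aV - FV ∈ J`, and `g` is coprime to `v`
    obtain ⟨a, haJ, ha⟩ := (Ideal.mem_map_iff_of_surjective _ modTwo_surjective).1
      (hJ ▸ Ideal.mem_span_singleton_self (modTwo F))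
    obtain ⟨c, hc⟩ := modTwo_eq_zero_iff.1 (show modTwo (a - F) = 0 by rw [map_sub, ha, sub_self])
    have h2Vc : 2 * (V * c) ∈ J := by
      have : 2 * (V * c) = V * a - F * V := by linear_combination -V * hc
      exact this ▸ J.sub_mem (J.mul_mem_left V haJ) hFV
    have hGc : modTwo G ∣ modTwo c :=
      hGV.dvd_of_dvd_mul_left (by rw [← map_mul]; exact (hK _).1 h2Vc)
    have : F = a - 2 * c := by linear_combination -hc
    exact this ▸ J.sub_mem haJ ((hK c).2 hGc)
  refine le_antisymm (fun b hb => ?_) (by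
    rw [Ideal.span_le, Set.insert_subset_iff, Set.singleton_subset_iff]
    exact ⟨hF, h2G⟩)
  obtain ⟨q', hq'⟩ := Ideal.mem_span_singleton.1 (hJ ▸ Ideal.mem_map_of_mem modTwo hb)
  obtain ⟨q, rfl⟩ := modTwo_surjective q'
  obtain ⟨d, hd⟩ := modTwo_eq_zero_iff.1
    (show modTwo (b - F * q) = 0 by rw [map_sub, map_mul, hq', sub_self])
  have h2d : 2 * d ∈ J := hd ▸ J.sub_mem hb (J.mul_mem_right q hF)
  obtain ⟨r, hr⟩ := two_mul_dvd_two_mul_of_modTwo_dvd ((hK d).1 h2d)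
  have : b = q * F + r * (2 * G) := by linear_combination hd + hr
  rw [this]
  exact Ideal.add_mem _ (Ideal.mul_mem_left _ _ (Ideal.subset_span (Set.mem_insert _ _)))
    (Ideal.mul_mem_left _ _ (Ideal.subset_span (Set.mem_insert_of_mem _ rfl)))

lemma mem_map_modTwo_iff {K : Ideal (ZMod 4)[X]} (h2 : 2 ∈ K) {b : (ZMod 4)[X]} :
    modTwo b ∈ K.map modTwo ↔ b ∈ K := by
  rw [← Ideal.mem_comap, Ideal.comap_map_of_surjective' _ modTwo_surjective, ker_modTwo,
    sup_eq_left.2 ((Ideal.span_singleton_le_iff_mem _).2 h2)]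

lemma monic_of_ne_zero_of_zmod_two {p : (ZMod 2)[X]} (hp : p ≠ 0) : p.Monic := by
  have hlc := leadingCoeff_ne_zero.2 hp
  show p.leadingCoeff = 1
  generalize p.leadingCoeff = a at hlc
  revert a
  decide

theorem exists_ideal_eq_span {k : ℕ} (hk : Odd k) {J : Ideal (ZMod 4)[X]}
    (hX : X ^ k - 1 ∈ J) :
    ∃ F G : (ZMod 4)[X], F.Monic ∧ G.Monic ∧ G ∣ F ∧ F ∣ X ^ k - 1 ∧
      J = Ideal.span {F + 2 * G, X ^ k - 1} := by
  set K := J.colon {2}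
  have hJK : J ≤ K := fun b hb => Submodule.mem_colon_singleton.2 (J.mul_mem_right 2 hb)
  have h2K : 2 ∈ K := by
    rw [Submodule.mem_colon_singleton, smul_eq_mul, show (2 * 2 : (ZMod 4)[X]) = 4 by norm_num,
      four_eq_zero]
    exact J.zero_mem
  set f := Submodule.IsPrincipal.generator (J.map modTwo)
  set g := Submodule.IsPrincipal.generator (K.map modTwo)
  have hf : J.map modTwo = Ideal.span {f} := (Ideal.span_singleton_generator _).symm
  have hg : K.map modTwo = Ideal.span {g} := (Ideal.span_singleton_generator _).symm
  have hfX : f ∣ X ^ k - 1 := by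
    rw [← Ideal.mem_span_singleton, ← hf, ← modTwo_X_pow_sub_one]
    exact Ideal.mem_map_of_mem modTwo hX
  have hgf : g ∣ f := by
    rw [← Ideal.mem_span_singleton, ← hg]
    exact Ideal.map_mono hJK (hf ▸ Ideal.mem_span_singleton_self f)
  have hf0 : f ≠ 0 := ne_zero_of_dvd_ne_zero (monic_X_pow_sub_one hk.pos.ne').ne_zero hfX
  obtain ⟨F, G, U, V, hFm, hGm, hF, hG, hGU, hFV, hGV, hUV⟩ :=
    exists_lift_of_dvd_dvd_X_pow_sub_one hk (monic_of_ne_zero_of_zmod_two hf0)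
      (monic_of_ne_zero_of_zmod_two (ne_zero_of_dvd_ne_zero hf0 hgf)) hgf hfX
  have hK : ∀ b, 2 * b ∈ J ↔ modTwo G ∣ modTwo b := fun b => by
    rw [hG, ← Ideal.mem_span_singleton, ← hg, mem_map_modTwo_iff h2K,
      Submodule.mem_colon_singleton, smul_eq_mul, mul_comm]
  refine ⟨F, G, hFm, hGm, ⟨U, hGU.symm⟩, ⟨V, hFV.symm⟩, ?_⟩
  rw [← hFV, ← span_eq_span_add_two_mul hGU hUV]
  exact eq_span_of_map_modTwo (hFV ▸ hX) hGV (hF ▸ hf) hK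

theorem exists_submodule_eq_span {k : ℕ} (hk : Odd k) (N : Submodule (ZMod 4)[X] (R4 k)) :
    ∃ f g : (ZMod 4)[X], f.Monic ∧ g.Monic ∧ g ∣ f ∧ f ∣ X ^ k - 1 ∧
      N = Submodule.span (ZMod 4)[X] {Ideal.Quotient.mk _ (f + 2 * g)} := by
  set π := (Ideal.Quotient.mkₐ (ZMod 4)[X] (Ideal.span {(X : (ZMod 4)[X]) ^ k - 1})).toLinearMap
  have hπ : Function.Surjective π := Ideal.Quotient.mkₐ_surjective (ZMod 4)[X] _
  have hπX : π (X ^ k - 1) = 0 := Ideal.Quotient.eq_zero_iff_mem.2 (Ideal.mem_span_singleton_self _)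
  obtain ⟨F, G, hFm, hGm, hGF, hFX, hJ⟩ :=
    exists_ideal_eq_span hk (J := N.comap π) (by rw [Submodule.mem_comap, hπX]; exact N.zero_mem)
  refine ⟨F, G, hFm, hGm, hGF, hFX, ?_⟩
  replace hJ : N.comap π = Submodule.span _ {F + 2 * G, X ^ k - 1} := hJ
  rw [← Submodule.map_comap_eq_of_surjective hπ N, hJ, Submodule.map_span,
    Set.image_pair, hπX, Set.pair_comm, Submodule.span_insert_zero]
  rfl

/-- Every GQC code `C` of odd block lengths `(m₁,…,m_l)` over `ℤ/4`, identified with a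
`(ℤ/4)[x]`-submodule of `R = ∏ᵢ (ℤ/4)[x]/(x^{m_i}-1)`, has an upper-triangular
normalized generating set `a₁,…,a_l` with `a_i = (F_{i,1}|…|F_{i,i}|0|…|0)` and
diagonal entries `F_{i,i} = f_{i,i} + 2 g_{i,i}` where `f_{i,i}, g_{i,i}` are monic
with `g_{i,i} ∣ f_{i,i} ∣ x^{m_i} - 1`. -/
theorem normalized_generating_set (l : ℕ) (m : Fin l → ℕ) (hm : ∀ i, Odd (m i))
    (Ccode : Submodule (Polynomial (ZMod 4)) (∀ i, R4 (m i))) :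
    ∃ F : Fin l → Fin l → Polynomial (ZMod 4),
      Ccode = Submodule.span (Polynomial (ZMod 4))
          (Set.range fun i => (fun j => Ideal.Quotient.mk _ (F i j) : ∀ j, R4 (m j))) ∧
      (∀ i j, i < j → F i j = 0) ∧
      (∀ i, ∃ f g : Polynomial (ZMod 4), f.Monic ∧ g.Monic ∧ g ∣ f ∧
        f ∣ X ^ (m i : ℕ) - 1 ∧ F i i = f + 2 * g) := by
  choose f g hf hg hgf hfX hpivot using
    fun i => exists_submodule_eq_span (hm i) (pivotSubmodule Ccode i)
  obtain ⟨a, hC, ha_upper, ha_diag⟩ :=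
    exists_triangular_span_eq Ccode (fun i => Ideal.Quotient.mk _ (f i + 2 * g i)) hpivot
  let F : Fin l → Fin l → (ZMod 4)[X] := fun i j =>
    if i < j then 0
    else if j = i then f i + 2 * g i
    else Function.surjInv Ideal.Quotient.mk_surjective (a i j)
  have hFa : ∀ i, (fun j => Ideal.Quotient.mk _ (F i j) : ∀ j, R4 (m j)) = a i := by
    intro i
    funext j
    simp only [F]
    split_ifs with hij hji
    · rw [map_zero, ha_upper i j hij]
    · subst hji
      exact (ha_diag j).symm
    · exact Function.surjInv_eq _ _
  refine ⟨F, ?_, fun i j hij => if_pos hij, fun i => ⟨f i, g i, hf i, hg i, hgf i, hfX i, ?_⟩⟩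
  · rwa [funext hFa]
  · simp [F]
end

section
/- Let m_1,...,m_l be odd positive integers, m = lcm(m_1,...,m_l), and for c(x), d(x) in R = ∏ Z4[x]/(x^{m_i}−1) define d ∘ c = Σ_i d_i(x) · c̃_i(x) · θ_i(x^{m_i}) in Z4[x]/(x^m−1), where c̃_i(x) = x^{m−deg(c_i)−1} c_i*(x) with c_i*(x) = x^{deg c_i} c_i(1/x), and θ_i(x^{m_i}) = (x^m−1)/(x^{m_i}−1). Then for vectors c, d ∈ Z4^{m_1}×···×Z4^{m_l} with polynomial representatives c(x), d(x): d is orthogonal (under the Euclidean inner product) to c and to all simultaneous cyclic shifts of c if and only if d(x) ∘ c(x) = 0. -/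
open Polynomial

/-- The simultaneous cyclic shift of each block. -/
def shiftAll {l : ℕ} (m : Fin l → ℕ) [∀ i, NeZero (m i)]
    (c : ∀ i, Fin (m i) → ZMod 4) : ∀ i, Fin (m i) → ZMod 4 :=
  fun i j => c i (j - 1)

/-- The Euclidean inner product on `(ℤ/4)^{m₁} × ⋯ × (ℤ/4)^{m_l}`. -/
def innerP {l : ℕ} (m : Fin l → ℕ) (c d : ∀ i, Fin (m i) → ZMod 4) : ZMod 4 :=
  ∑ i, ∑ j, c i j * d i j

/-!
In `S = R[x]/(x^M - 1)` the factor `θᵢ = Σ_{s < M/mᵢ} x^{s mᵢ}` absorbs `x^{mᵢ}`, since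
`(x^{mᵢ} - 1) θᵢ = x^M - 1`; so `x^e θᵢ` depends only on `e mod mᵢ`. Expanding `x · (d ∘ c)` with this
rule gives `Σ_{t < M} a(t) x^t`, where `a(t) = Σᵢ Σⱼ d_{i,j} c_{i,j-t}` is the inner product of `d` with
the `t`-th simultaneous shift of `c`. This representative has degree `< M`, so it vanishes in `S` iff
`a(t) = 0` for `t < M`, and `a` is `M`-periodic. Finally `x` is a unit in `S`.
-/

open Fin.NatCast Fin.CommRing Finset

section Correlation

variable {R : Type*} [CommRing R] {l : ℕ}

def cyclicCorrelation (m : Fin l → ℕ) [∀ i, NeZero (m i)] (d c : ∀ i, Fin (m i) → R) (N : ℕ) :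
    R :=
  ∑ i, ∑ j, d i j * c i (j - N)

theorem cyclicCorrelation_periodic {m : Fin l → ℕ} [∀ i, NeZero (m i)] {M : ℕ}
    (hdvd : ∀ i, m i ∣ M) (d c : ∀ i, Fin (m i) → R) :
    Function.Periodic (cyclicCorrelation m d c) M := by
  intro N
  simp only [cyclicCorrelation, Nat.cast_add, Fin.natCast_eq_zero.mpr (hdvd _), add_zero]

end Correlation

theorem shiftAll_iterate_apply {l : ℕ} (m : Fin l → ℕ) [∀ i, NeZero (m i)]
    (c : ∀ i, Fin (m i) → ZMod 4) (N : ℕ) (i : Fin l) (j : Fin (m i)) :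
    (shiftAll m)^[N] c i j = c i (j - N) := by
  induction N generalizing j with
  | zero => simp
  | succ N ih => rw [Function.iterate_succ_apply', shiftAll, ih, sub_sub, Nat.cast_succ, add_comm]

theorem innerP_shiftAll_iterate {l : ℕ} (m : Fin l → ℕ) [∀ i, NeZero (m i)]
    (c d : ∀ i, Fin (m i) → ZMod 4) (N : ℕ) :
    innerP m d ((shiftAll m)^[N] c) = cyclicCorrelation m d c N := by
  simp only [innerP, cyclicCorrelation, shiftAll_iterate_apply]

section RepeatSum

variable {S : Type*} [CommRing S] {ξ : S} {M n : ℕ}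

def repeatSum (ξ : S) (M n : ℕ) : S :=
  ∑ s ∈ range (M / n), ξ ^ (s * n)

theorem pow_mul_repeatSum_self (hξ : ξ ^ M = 1) (hn : n ∣ M) :
    ξ ^ n * repeatSum ξ M n = repeatSum ξ M n := by
  have hgeom := geom_sum_mul (ξ ^ n) (M / n)
  rw [← pow_mul, Nat.mul_div_cancel' hn, hξ, sub_self] at hgeom
  simp only [repeatSum, pow_mul']
  linear_combination hgeom

theorem pow_mul_repeatSum (hξ : ξ ^ M = 1) (hn : n ∣ M) (e : ℕ) :
    ξ ^ e * repeatSum ξ M n = ξ ^ (e % n) * repeatSum ξ M n := by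
  have hper : ∀ q : ℕ, (ξ ^ n) ^ q * repeatSum ξ M n = repeatSum ξ M n := by
    intro q
    induction q with
    | zero => simp
    | succ q ih => rw [pow_succ, mul_assoc, pow_mul_repeatSum_self hξ hn, ih]
  conv_lhs => rw [← Nat.mod_add_div e n, pow_add, pow_mul, mul_assoc, hper]

theorem sum_range_eq_sum_mul_repeatSum [NeZero n] (hn : n ∣ M) (h : Fin n → S) :
    ∑ t ∈ range M, h t * ξ ^ t = ∑ r : Fin n, h r * ξ ^ (r : ℕ) * repeatSum ξ M n := by
  rw [← Nat.div_mul_cancel hn, Finset.sum_range, ← finProdFinEquiv.sum_comp,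
    Fintype.sum_prod_type, Finset.sum_comm]
  simp only [repeatSum, Nat.div_mul_cancel hn, Finset.mul_sum, Finset.sum_range]
  refine sum_congr rfl fun r _ => sum_congr rfl fun s _ => ?_
  have hcast : (((finProdFinEquiv (s, r) : ℕ)) : Fin n) = r := by
    simp [finProdFinEquiv_apply_val]
  rw [hcast, finProdFinEquiv_apply_val, pow_add, mul_comm n, mul_assoc]

theorem natCast_add_sub_one_sub_add_one [NeZero n] (hn : n ∣ M) (hM : 0 < M) (j k : Fin n) :
    (((j + (M - 1 - k) + 1 : ℕ)) : Fin n) = j - k := by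
  have hk : (k : ℕ) < M := k.isLt.trans_le (Nat.le_of_dvd hM hn)
  rw [show (j : ℕ) + (M - 1 - k) + 1 = j + M - k by omega, Nat.cast_sub (by omega), Nat.cast_add,
    Fin.natCast_eq_zero.mpr hn, add_zero, Fin.cast_val_eq_self, Fin.cast_val_eq_self]

theorem mul_mul_reverse_mul_repeatSum [NeZero n] (hξ : ξ ^ M = 1) (hn : n ∣ M) (hM : 0 < M)
    (g f : Fin n → S) :
    ξ * ((∑ j : Fin n, g j * ξ ^ (j : ℕ)) * (∑ k : Fin n, f k * ξ ^ (M - 1 - k)) *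
        repeatSum ξ M n) =
      ∑ r : Fin n, (∑ j, g j * f (j - r)) * ξ ^ (r : ℕ) * repeatSum ξ M n := by
  calc _ = ∑ j : Fin n, ∑ k : Fin n,
          g j * f k * (ξ ^ ((j : ℕ) + (M - 1 - k) + 1) * repeatSum ξ M n) := by
        rw [Finset.sum_mul_sum]
        simp only [Finset.sum_mul, Finset.mul_sum]
        refine sum_congr rfl fun j _ => sum_congr rfl fun k _ => ?_
        ring
    _ = ∑ j : Fin n, ∑ k : Fin n, g j * f k * (ξ ^ ((j - k : Fin n) : ℕ) * repeatSum ξ M n) := by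
        refine sum_congr rfl fun j _ => sum_congr rfl fun k _ => ?_
        rw [pow_mul_repeatSum hξ hn, ← Fin.val_natCast,
          natCast_add_sub_one_sub_add_one hn hM]
    _ = ∑ j : Fin n, ∑ r : Fin n, g j * f (j - r) * (ξ ^ (r : ℕ) * repeatSum ξ M n) := by
        refine sum_congr rfl fun j _ => ?_
        rw [← (Equiv.subLeft j).sum_comp]
        simp only [Equiv.subLeft_apply, sub_sub_cancel]
    _ = _ := by
        rw [Finset.sum_comm]
        simp only [Finset.sum_mul, mul_assoc]

end RepeatSum

section QuotientXPowSubOne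

variable {R : Type*} [CommRing R]

theorem mk_X_pow_eq_one (M : ℕ) :
    (Ideal.Quotient.mk (Ideal.span {(X : R[X]) ^ M - 1}) X) ^ M = 1 := by
  rw [← map_pow, ← map_one (Ideal.Quotient.mk _), Ideal.Quotient.eq]
  exact Ideal.mem_span_singleton_self _

theorem Polynomial.Monic.mk_eq_zero_iff_of_degree_lt {p q : R[X]} (hp : p.Monic)
    (hq : q.degree < p.degree) : Ideal.Quotient.mk (Ideal.span {p}) q = 0 ↔ q = 0 := by
  rw [Ideal.Quotient.eq_zero_iff_mem, Ideal.mem_span_singleton]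
  refine ⟨fun hdvd => ?_, fun h => h ▸ dvd_zero p⟩
  by_contra hq0
  exact hp.not_dvd_of_degree_lt hq0 hq hdvd

theorem sum_range_C_mul_X_pow_eq_zero_iff {M : ℕ} (b : ℕ → R) :
    ∑ t ∈ range M, C (b t) * X ^ t = 0 ↔ ∀ t < M, b t = 0 := by
  refine ⟨fun h t ht => ?_, fun h => Finset.sum_eq_zero fun t ht => ?_⟩
  · simpa [Polynomial.finsetSum_coeff, coeff_C_mul_X_pow, ht] using congrArg (coeff · t) h
  · rw [h t (mem_range.mp ht), C_0, zero_mul]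

theorem mk_sum_range_C_mul_X_pow_eq_zero_iff [Nontrivial R] {M : ℕ} (hM : 0 < M) (b : ℕ → R) :
    Ideal.Quotient.mk (Ideal.span {(X : R[X]) ^ M - 1}) (∑ t ∈ range M, C (b t) * X ^ t) = 0 ↔
      ∀ t < M, b t = 0 := by
  have hmonic : (X ^ M - 1 : R[X]).Monic := by simpa using monic_X_pow_sub_C (1 : R) hM.ne'
  have hdeg : (∑ t ∈ range M, C (b t) * X ^ t).degree < (X ^ M - 1 : R[X]).degree := by
    rw [← C_1, degree_X_pow_sub_C hM, Finset.sum_range]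
    exact degree_sum_fin_lt _
  rw [hmonic.mk_eq_zero_iff_of_degree_lt hdeg, sum_range_C_mul_X_pow_eq_zero_iff]

end QuotientXPowSubOne

section Circ

variable {R : Type*} [CommRing R] {l : ℕ}

/-- The product `d ∘ c` of the paper: `c̃ᵢ(x) = x^{M - deg cᵢ - 1} cᵢ*(x)` is written as
`Σⱼ c_{i,j} x^{M-1-j}`, and `θᵢ(x^{mᵢ}) = (x^M - 1)/(x^{mᵢ} - 1)` as `Σ_{s < M/mᵢ} x^{s mᵢ}`. -/
noncomputable def circ (m : Fin l → ℕ) (M : ℕ) (d c : ∀ i, Fin (m i) → R) : R[X] :=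
  ∑ i, (∑ j : Fin (m i), C (d i j) * X ^ (j : ℕ)) *
    (∑ j : Fin (m i), C (c i j) * X ^ (M - 1 - (j : ℕ))) *
    (∑ s ∈ range (M / m i), X ^ (s * m i))

theorem mk_X_mul_mk_circ {m : Fin l → ℕ} [∀ i, NeZero (m i)] {M : ℕ} (hdvd : ∀ i, m i ∣ M)
    (hM : 0 < M) (d c : ∀ i, Fin (m i) → R) :
    Ideal.Quotient.mk (Ideal.span {(X : R[X]) ^ M - 1}) X *
        Ideal.Quotient.mk (Ideal.span {(X : R[X]) ^ M - 1}) (circ m M d c) =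
      Ideal.Quotient.mk (Ideal.span {(X : R[X]) ^ M - 1})
        (∑ t ∈ range M, C (cyclicCorrelation m d c t) * X ^ t) := by
  set π := Ideal.Quotient.mk (Ideal.span {(X : R[X]) ^ M - 1})
  have hblock : ∀ i, π X * π ((∑ j : Fin (m i), C (d i j) * X ^ (j : ℕ)) *
      (∑ j : Fin (m i), C (c i j) * X ^ (M - 1 - (j : ℕ))) *
      (∑ s ∈ range (M / m i), X ^ (s * m i))) =
        ∑ t ∈ range M, (∑ j, π (C (d i j)) * π (C (c i (j - t)))) * π X ^ t := by
    intro i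
    simp only [map_mul, map_sum, map_pow]
    rw [← repeatSum, mul_mul_reverse_mul_repeatSum (mk_X_pow_eq_one M) (hdvd i) hM,
      ← sum_range_eq_sum_mul_repeatSum (hdvd i)
        (fun r => ∑ j, π (C (d i j)) * π (C (c i (j - r))))]
  rw [circ, map_sum, Finset.mul_sum, Finset.sum_congr rfl fun i _ => hblock i, Finset.sum_comm]
  simp only [cyclicCorrelation, map_sum, map_mul, map_pow, Finset.sum_mul]

end Circ

theorem orthogonality_iff_circ_zero_general (l : ℕ) (m : Fin l → ℕ) [∀ i, NeZero (m i)]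
    (M : ℕ) (hM : M = Finset.univ.lcm m)
    (c d : ∀ i, Fin (m i) → ZMod 4) :
    (∀ N : ℕ, innerP m d ((shiftAll m)^[N] c) = 0) ↔
      Ideal.Quotient.mk (Ideal.span {(X : Polynomial (ZMod 4)) ^ M - 1})
        (∑ i, (∑ j : Fin (m i), C (d i j) * X ^ (j : ℕ)) *
              (∑ j : Fin (m i), C (c i j) * X ^ (M - 1 - (j : ℕ))) *
              (∑ s ∈ Finset.range (M / m i), X ^ (s * m i))) = 0 := by
  have hdvd : ∀ i, m i ∣ M := fun i => hM ▸ Finset.dvd_lcm (Finset.mem_univ i)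
  have hM0 : 0 < M := by
    rw [hM, Nat.pos_iff_ne_zero, Ne, Finset.lcm_eq_zero_iff]
    rintro ⟨i, -, hi⟩
    exact NeZero.ne (m i) hi
  have : Fact (1 < 4) := ⟨by norm_num⟩
  have hunit := IsUnit.of_pow_eq_one (mk_X_pow_eq_one (R := ZMod 4) M) hM0.ne'
  change _ ↔ Ideal.Quotient.mk _ (circ m M d c) = 0
  rw [← hunit.mul_right_eq_zero, mk_X_mul_mk_circ hdvd hM0,
    mk_sum_range_C_mul_X_pow_eq_zero_iff hM0]
  simp only [innerP_shiftAll_iterate]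
  refine ⟨fun h t _ => h t, fun h N => ?_⟩
  rw [← (cyclicCorrelation_periodic hdvd d c).map_mod_nat]
  exact h _ (Nat.mod_lt N hM0)

/-- Let `M = lcm(m₁,…,m_l)`.  A vector `d` is orthogonal to `c` and to all simultaneous
cyclic shifts of `c` iff `d(x) ∘ c(x) = 0` in `(ℤ/4)[x]/(x^M - 1)`, where
`d ∘ c = Σᵢ dᵢ(x) · c̃ᵢ(x) · θᵢ(x^{m_i})`, `c̃ᵢ(x) = Σⱼ c_{i,j} x^{M-1-j}`
(which equals `x^{M - deg(cᵢ) - 1} cᵢ*(x)`), and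
`θᵢ(x^{m_i}) = (x^M - 1)/(x^{m_i} - 1) = Σ_{s < M/m_i} x^{s·m_i}`. -/
theorem orthogonality_iff_circ_zero (l : ℕ) (m : Fin l → ℕ) [∀ i, NeZero (m i)]
    (hodd : ∀ i, Odd (m i)) (M : ℕ) (hM : M = Finset.univ.lcm m)
    (c d : ∀ i, Fin (m i) → ZMod 4) :
    (∀ N : ℕ, innerP m d ((shiftAll m)^[N] c) = 0) ↔
      Ideal.Quotient.mk (Ideal.span {(X : Polynomial (ZMod 4)) ^ M - 1})
        (∑ i, (∑ j : Fin (m i), C (d i j) * X ^ (j : ℕ)) *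
              (∑ j : Fin (m i), C (c i j) * X ^ (M - 1 - (j : ℕ))) *
              (∑ s ∈ Finset.range (M / m i), X ^ (s * m i))) = 0 :=
  orthogonality_iff_circ_zero_general l m M hM c d
end

section
/- The dual code of a GQC code of block lengths (m_1,...,m_l) over Z4 is itself a GQC code of the same block lengths. -/
/-!
The simultaneous shift only permutes coordinates inside each block, so it is an injective
isometry of `innerP`. An injective map of the finite code `C` into itself is onto `C`; hence
if `d ⊥ C` then `shiftAll d ⊥ shiftAll C = C`.
-/

theorem LinearMap.BilinForm.map_mem_orthogonal_of_isometry {R M : Type*} [CommSemiring R]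
    [AddCommMonoid M] [Module R M] [Finite M] (B : LinearMap.BilinForm R M) {f : M → M}
    (hf : Function.Injective f) (hB : ∀ x y, B (f x) (f y) = B x y) {N : Submodule R M}
    (hN : ∀ x ∈ N, f x ∈ N) : ∀ y ∈ B.orthogonal N, f y ∈ B.orthogonal N := by
  intro y hy
  rw [LinearMap.BilinForm.mem_orthogonal_iff] at hy ⊢
  intro x hx
  have hbij : Set.BijOn f N N :=
    ((Set.toFinite _).injOn_iff_bijOn_of_mapsTo hN).mp hf.injOn
  obtain ⟨x', hx', rfl⟩ := hbij.surjOn hx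
  exact (hB x' y).trans (hy x' hx')

section innerP

variable {l : ℕ} {m : Fin l → ℕ}

theorem innerP_comm (c d : ∀ i, Fin (m i) → ZMod 4) : innerP m c d = innerP m d c := by
  simp only [innerP, mul_comm]

theorem innerP_add_left (c c' d : ∀ i, Fin (m i) → ZMod 4) :
    innerP m (c + c') d = innerP m c d + innerP m c' d := by
  simp only [innerP, Pi.add_apply, add_mul, Finset.sum_add_distrib]

theorem innerP_smul_left (r : ZMod 4) (c d : ∀ i, Fin (m i) → ZMod 4) :
    innerP m (r • c) d = r * innerP m c d := by
  simp only [innerP, Pi.smul_apply, smul_eq_mul, mul_assoc, Finset.mul_sum]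

theorem innerP_add_right (c d d' : ∀ i, Fin (m i) → ZMod 4) :
    innerP m c (d + d') = innerP m c d + innerP m c d' := by
  simp only [innerP_comm c, innerP_add_left]

theorem innerP_smul_right (r : ZMod 4) (c d : ∀ i, Fin (m i) → ZMod 4) :
    innerP m c (r • d) = r * innerP m c d := by
  simp only [innerP_comm c, innerP_smul_left]

variable (m) in
def innerPForm : LinearMap.BilinForm (ZMod 4) (∀ i, Fin (m i) → ZMod 4) :=
  LinearMap.mk₂ (ZMod 4) (innerP m) innerP_add_left innerP_smul_left innerP_add_right
    innerP_smul_right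

theorem innerPForm_apply (c d : ∀ i, Fin (m i) → ZMod 4) : innerPForm m c d = innerP m c d :=
  rfl

variable [∀ i, NeZero (m i)]

theorem innerP_shiftAll_shiftAll (c d : ∀ i, Fin (m i) → ZMod 4) :
    innerP m (shiftAll m c) (shiftAll m d) = innerP m c d :=
  Finset.sum_congr rfl fun i _ => Equiv.sum_comp (Equiv.subRight 1) fun j => c i j * d i j

variable (m) in
theorem shiftAll_injective : Function.Injective (shiftAll m) := by
  intro c d h
  funext i j
  simpa [shiftAll] using congrFun (congrFun h i) (j + 1)

end innerP

theorem dual_of_GQC_is_GQC_general (l : ℕ) (m : Fin l → ℕ) [∀ i, NeZero (m i)]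
    (Ccode : Submodule (ZMod 4) (∀ i, Fin (m i) → ZMod 4))
    (hC : ∀ c ∈ Ccode, shiftAll m c ∈ Ccode) :
    ∃ D : Submodule (ZMod 4) (∀ i, Fin (m i) → ZMod 4),
      (D : Set (∀ i, Fin (m i) → ZMod 4)) =
          {d | ∀ c ∈ Ccode, innerP m d c = 0} ∧
      ∀ d ∈ D, shiftAll m d ∈ D := by
  refine ⟨(innerPForm m).orthogonal Ccode, ?_, ?_⟩
  · ext d
    simp only [SetLike.mem_coe, LinearMap.BilinForm.mem_orthogonal_iff, innerPForm_apply,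
      Set.mem_ofPred_eq, innerP_comm]
  · exact (innerPForm m).map_mem_orthogonal_of_isometry (shiftAll_injective m)
      innerP_shiftAll_shiftAll hC

/-- The dual of a GQC code of block lengths `(m₁,…,m_l)` over `ℤ/4` is itself a GQC code
of the same block lengths: the set of vectors orthogonal to every codeword is a
`ℤ/4`-submodule which is closed under the simultaneous cyclic shift. -/
theorem dual_of_GQC_is_GQC (l : ℕ) (m : Fin l → ℕ) [∀ i, NeZero (m i)]
    (hodd : ∀ i, Odd (m i))
    (Ccode : Submodule (ZMod 4) (∀ i, Fin (m i) → ZMod 4))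
    (hC : ∀ c ∈ Ccode, shiftAll m c ∈ Ccode) :
    ∃ D : Submodule (ZMod 4) (∀ i, Fin (m i) → ZMod 4),
      (D : Set (∀ i, Fin (m i) → ZMod 4)) =
          {d | ∀ c ∈ Ccode, innerP m d c = 0} ∧
      ∀ d ∈ D, shiftAll m d ∈ D :=
  dual_of_GQC_is_GQC_general l m Ccode hC
end
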